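/- Classical Cheeger inequality in the mean form: for the symmetric Laplacian Δ with eigenvalues 0 = λ_1 ≤ λ_2 ≤ …, if f is an eigenfunction of Δ with eigenvalue λ having at least 2 strong sign-graphs (which holds for any eigenfunction of λ_2 when λ_2 > 0), then (1/2)λ_2 ≤ ι_2 ≤ √(2λ_2), where ι_2 = min over nonempty proper Q ⊆ V of ∂(Q)/(2π(Q)(1−π(Q))). -/

import Mathlib

/-!
Write `S(u,v) = (φ(u,v) + φ(v,u))/2`, so that `∂(Q) = ∑_{u∈Q, v∉Q} S(u,v)` and
`⟨Δg, g⟩_π = ½ ∑_{u,v} S(u,v) (g(u) − g(v))²`.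

Lower bound: the test function `1_Q − π(Q)` is orthogonal to the constants, has energy `∂(Q)`
and squared norm `π(Q)(1 − π(Q))`, so the variational characterisation of `λ` bounds the ratio
of `Q` below by `λ/2`.

Upper bound: replacing `f` by `−f` if necessary, `{f > 0}` carries at most half of the mass. Its
positive part `g` satisfies `⟨Δg, g⟩ ≤ λ‖g‖²`, because `Δf = λf` on `{f > 0}` and `g ≥ f`. A subset
`Q` of `{f > 0}` minimising `∂(Q)/π(Q)` satisfies, by the co-area argument (peel off the level sets
of `g²` one value at a time), `∂(Q)/π(Q) · 2‖g‖² ≤ ∑ S(u,v) |g(u)² − g(v)²|`, and Cauchy–Schwarz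
bounds the right-hand side by `√(2λ) · 2‖g‖²`. As `π(Q) ≤ 1/2`, the ratio of `Q` in `ι₂` is at
most `∂(Q)/π(Q) ≤ √(2λ)`.
-/

open Finset

/-- Outgoing boundary flow `∂(Q) = ∑_{u∈Q, v∉Q} K(u,v)π(u)`. -/
noncomputable def dpart {V : Type*} [Fintype V] [DecidableEq V]
    (K : V → V → ℝ) (π : V → ℝ) (Q : Finset V) : ℝ :=
  ∑ u ∈ Q, ∑ v ∈ Qᶜ, K u v * π u

/-- `π(Q) = ∑_{u∈Q} π(u)`. -/
noncomputable def pim {V : Type*} (π : V → ℝ) (Q : Finset V) : ℝ :=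
  ∑ u ∈ Q, π u

/-- The symmetric Laplacian `Δ = id − (K + K*)/2` acting on `π`-weighted functions. -/
noncomputable def DeltaOp {V : Type*} [Fintype V]
    (K : V → V → ℝ) (π : V → ℝ) (f : V → ℝ) : V → ℝ :=
  fun u => f u - (∑ v, (K u v + K v u * π v / π u) * f v) / 2

/-- The mean Cheeger constant `ι₂ = min_Q ∂(Q)/(2π(Q)(1−π(Q)))`. -/
noncomputable def iota2 {V : Type*} [Fintype V] [DecidableEq V]
    (K : V → V → ℝ) (π : V → ℝ) : ℝ :=
  sInf {x : ℝ | ∃ Q : Finset V, Q.Nonempty ∧ Q ≠ Finset.univ ∧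
    x = dpart K π Q / (2 * pim π Q * (1 - pim π Q))}

theorem eq_truncate_add {a β : ℝ} (ha : a = 0 ∨ β ≤ a) (hβ : 0 < β) :
    a = max (a - β) 0 + β * (if 0 < a then 1 else 0) := by
  rcases ha with rfl | ha
  · simp [hβ.le]
  · simp [hβ.trans_le ha, ha]

theorem abs_sub_eq_truncate_add {a b β : ℝ} (ha : a = 0 ∨ β ≤ a) (hb : b = 0 ∨ β ≤ b)
    (hβ : 0 < β) :
    |a - b| = |max (a - β) 0 - max (b - β) 0| +
      β * ((if 0 < a then 1 else 0) - (if 0 < b then 1 else 0)) ^ 2 := by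
  rcases ha with rfl | ha <;> rcases hb with rfl | hb
  · simp
  · simp [hβ.trans_le hb, hb, hβ.le, hβ.le.trans hb, abs_sub_comm β b,
      abs_of_nonneg (sub_nonneg.mpr hb)]
  · simp [hβ.trans_le ha, ha, hβ.le, hβ.le.trans ha, abs_of_nonneg (sub_nonneg.mpr ha)]
  · simp [hβ.trans_le ha, hβ.trans_le hb, ha, hb]

theorem pim_pos {V : Type*} {π : V → ℝ} (hπ : ∀ u, 0 < π u) {Q : Finset V} (hQ : Q.Nonempty) :
    0 < pim π Q :=
  sum_pos (fun u _ => hπ u) hQ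

theorem pim_lt_one {V : Type*} [Fintype V] [DecidableEq V] {π : V → ℝ}
    (hπ : ∀ u, 0 < π u) (hπ1 : ∑ u, π u = 1) {Q : Finset V} (hQ : Q ≠ univ) : pim π Q < 1 := by
  have hcompl : 0 < ∑ u ∈ Qᶜ, π u :=
    sum_pos (fun u _ => hπ u) (nonempty_iff_ne_empty.mpr ((compl_eq_empty_iff Q).not.mpr hQ))
  rw [← hπ1, ← sum_add_sum_compl Q π, pim]
  linarith

theorem exists_pos_of_sum_mul_eq_zero {V : Type*} [Fintype V] {π f : V → ℝ}
    (hπ : ∀ u, 0 < π u) (hf0 : f ≠ 0) (hmean : ∑ u, f u * π u = 0) : ∃ u, 0 < f u := by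
  by_contra! h
  refine hf0 (funext fun u => ?_)
  have := (sum_eq_zero_iff_of_nonpos fun v _ => mul_nonpos_of_nonpos_of_nonneg (h v) (hπ v).le).mp
    hmean u (mem_univ u)
  simpa [(hπ u).ne'] using this

section WeightedGraph

variable {V : Type*} [Fintype V]

def cutWeight [DecidableEq V] (S : V → V → ℝ) (Q : Finset V) : ℝ :=
  ∑ u ∈ Q, ∑ v ∈ Qᶜ, S u v

theorem sum_sum_mul_indicator_sub_sq [DecidableEq V] {S : V → V → ℝ}
    (hS : ∀ u v, S u v = S v u) (Q : Finset V) :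
    ∑ u, ∑ v, S u v * ((if u ∈ Q then 1 else 0) - (if v ∈ Q then 1 else 0)) ^ 2 =
      2 * cutWeight S Q := by
  have hpt : ∀ u v, S u v * ((if u ∈ Q then (1 : ℝ) else 0) - (if v ∈ Q then 1 else 0)) ^ 2 =
      (if u ∈ Q then if v ∈ Qᶜ then S u v else 0 else 0) +
        (if v ∈ Q then if u ∈ Qᶜ then S v u else 0 else 0) := by
    intro u v
    by_cases hu : u ∈ Q <;> by_cases hv : v ∈ Q <;> simp [hu, hv, hS u v]
  simp only [hpt, sum_add_distrib]
  rw [sum_comm (f := fun u v => if v ∈ Q then if u ∈ Qᶜ then S v u else 0 else 0)]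
  simp only [sum_ite_irrel, sum_const_zero, sum_ite_mem, univ_inter, cutWeight]
  ring

theorem sum_sum_mul_sq_left {S : V → V → ℝ} {μ : V → ℝ} (hrow : ∀ u, ∑ v, S u v = μ u)
    (g : V → ℝ) : ∑ u, ∑ v, S u v * g u ^ 2 = ∑ u, g u ^ 2 * μ u :=
  sum_congr rfl fun u _ => by rw [← sum_mul, hrow, mul_comm]

theorem sum_sum_mul_sq_right {S : V → V → ℝ} {μ : V → ℝ} (hS : ∀ u v, S u v = S v u)
    (hrow : ∀ u, ∑ v, S u v = μ u) (g : V → ℝ) :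
    ∑ u, ∑ v, S u v * g v ^ 2 = ∑ u, g u ^ 2 * μ u := by
  rw [sum_comm, ← sum_sum_mul_sq_left hrow]
  exact sum_congr rfl fun v _ => sum_congr rfl fun u _ => by rw [hS]

theorem sum_sum_mul_sub_sq {S : V → V → ℝ} {μ : V → ℝ} (hS : ∀ u v, S u v = S v u)
    (hrow : ∀ u, ∑ v, S u v = μ u) (g : V → ℝ) :
    ∑ u, ∑ v, S u v * (g u - g v) ^ 2 =
      2 * (∑ u, g u ^ 2 * μ u - ∑ u, ∑ v, S u v * g u * g v) := by
  have hexp : ∀ u v, S u v * (g u - g v) ^ 2 =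
      S u v * g u ^ 2 + S u v * g v ^ 2 - 2 * (S u v * g u * g v) := fun u v => by ring
  simp only [hexp, sum_add_distrib, sum_sub_distrib, ← mul_sum, sum_sum_mul_sq_left hrow,
    sum_sum_mul_sq_right hS hrow]
  ring

theorem sum_sum_mul_add_sq_add_sum_sum_mul_sub_sq {S : V → V → ℝ} {μ : V → ℝ}
    (hS : ∀ u v, S u v = S v u) (hrow : ∀ u, ∑ v, S u v = μ u) (g : V → ℝ) :
    ∑ u, ∑ v, S u v * (g u + g v) ^ 2 + ∑ u, ∑ v, S u v * (g u - g v) ^ 2 =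
      4 * ∑ u, g u ^ 2 * μ u := by
  have hexp : ∀ u v, S u v * (g u + g v) ^ 2 + S u v * (g u - g v) ^ 2 =
      2 * (S u v * g u ^ 2) + 2 * (S u v * g v ^ 2) := fun u v => by ring
  simp only [← sum_add_distrib, hexp]
  simp only [sum_add_distrib, ← mul_sum, sum_sum_mul_sq_left hrow, sum_sum_mul_sq_right hS hrow]
  ring

theorem sq_sum_sum_mul_abs_sq_sub_sq_le {S : V → V → ℝ} (hS0 : ∀ u v, 0 ≤ S u v) (g : V → ℝ) :
    (∑ u, ∑ v, S u v * |g u ^ 2 - g v ^ 2|) ^ 2 ≤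
      (∑ u, ∑ v, S u v * (g u - g v) ^ 2) * ∑ u, ∑ v, S u v * (g u + g v) ^ 2 := by
  simp only [← Fintype.sum_prod_type']
  refine sum_sq_le_sum_mul_sum_of_sq_le_mul _ (fun p _ => by have := hS0 p.1 p.2; positivity)
    (fun p _ => by have := hS0 p.1 p.2; positivity) fun p _ => le_of_eq ?_
  rw [mul_pow, sq_abs]
  ring

theorem two_mul_mul_sum_le_of_le_cutWeight [DecidableEq V] {S : V → V → ℝ}
    (hS : ∀ u v, S u v = S v u) (μ : V → ℝ) (c : ℝ) (φ : V → ℝ) (hφ : ∀ u, 0 ≤ φ u)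
    (hcut : ∀ Q ⊆ univ.filter (0 < φ ·), c * pim μ Q ≤ cutWeight S Q) :
    2 * c * ∑ u, φ u * μ u ≤ ∑ u, ∑ v, S u v * |φ u - φ v| := by
  induction hn : #(univ.filter (0 < φ ·)) using Nat.strong_induction_on generalizing φ with
  | _ n ih =>
  set P := univ.filter (0 < φ ·)
  obtain hPe | ⟨u₀, hu₀, hmin⟩ := P.eq_empty_or_nonempty.imp id (P.exists_min_image φ)
  · have hzero : ∀ u, φ u = 0 := fun u =>
      (hφ u).antisymm' (not_lt.mp fun h => (filter_eq_empty_iff.mp hPe) (mem_univ u) h)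
    simp [hzero]
  -- `φ = ψ + β • 1_P`, where `β` is the least positive value of `φ` and `ψ` has smaller support
  set β := φ u₀
  have hβ : 0 < β := (mem_filter.mp hu₀).2
  have hdich : ∀ u, φ u = 0 ∨ β ≤ φ u := fun u =>
    (hφ u).eq_or_lt.imp Eq.symm fun h => hmin u (mem_filter.mpr ⟨mem_univ u, h⟩)
  set ψ := fun u => max (φ u - β) 0
  have hsupp : univ.filter (0 < ψ ·) ⊂ P := by
    refine ssubset_of_subset_of_ne (fun u hu => ?_) fun h => ?_
    · simp_all [ψ, P]; linarith
    · have := h ▸ hu₀; simp [ψ] at this; exact lt_irrefl β this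
  have hψ := ih _ (hn ▸ card_lt_card hsupp) ψ (fun u => le_max_right _ _)
    (fun Q hQ => hcut Q (hQ.trans hsupp.subset)) rfl
  have hmass : ∑ u, φ u * μ u = ∑ u, ψ u * μ u + β * pim μ P := by
    calc ∑ u, φ u * μ u = ∑ u, (ψ u + β * if 0 < φ u then 1 else 0) * μ u :=
          sum_congr rfl fun u _ => congrArg (· * μ u) (eq_truncate_add (hdich u) hβ)
      _ = _ := by simp [add_mul, sum_add_distrib, mul_sum, pim, sum_filter, P]
  have hvar : ∑ u, ∑ v, S u v * |φ u - φ v| =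
      ∑ u, ∑ v, S u v * |ψ u - ψ v| + β * (2 * cutWeight S P) := by
    rw [← sum_sum_mul_indicator_sub_sq hS P, mul_sum]
    simp only [← sum_add_distrib, mul_sum]
    refine sum_congr rfl fun u _ => sum_congr rfl fun v _ => ?_
    simp only [P, mem_filter, mem_univ, true_and]
    rw [abs_sub_eq_truncate_add (hdich u) (hdich v) hβ]
    ring
  have hP := mul_le_mul_of_nonneg_left (hcut P subset_rfl) (by positivity : (0 : ℝ) ≤ 2 * β)
  rw [hmass, hvar]
  linarith

theorem exists_cutWeight_div_pim_mul_le [DecidableEq V] {S : V → V → ℝ}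
    (hS : ∀ u v, S u v = S v u) {μ : V → ℝ} (hμ : ∀ u, 0 < μ u) {φ : V → ℝ}
    (hφ : ∀ u, 0 ≤ φ u) (hsupp : (univ.filter (0 < φ ·)).Nonempty) :
    ∃ Q ⊆ univ.filter (0 < φ ·), Q.Nonempty ∧
      cutWeight S Q / pim μ Q * (2 * ∑ u, φ u * μ u) ≤ ∑ u, ∑ v, S u v * |φ u - φ v| := by
  obtain ⟨Q, hQ, hmin⟩ :=
    ((univ.filter (0 < φ ·)).powerset.filter Finset.Nonempty).exists_min_image
      (fun Q => cutWeight S Q / pim μ Q) ⟨_, mem_filter.mpr ⟨mem_powerset_self _, hsupp⟩⟩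
  rw [mem_filter, mem_powerset] at hQ
  refine ⟨Q, hQ.1, hQ.2, ?_⟩
  have := two_mul_mul_sum_le_of_le_cutWeight hS μ (cutWeight S Q / pim μ Q) φ hφ fun R hR => ?_
  · linarith
  obtain rfl | hRne := R.eq_empty_or_nonempty
  · simp [pim, cutWeight]
  · exact (le_div_iff₀ (pim_pos hμ hRne)).mp
      (hmin R (mem_filter.mpr ⟨mem_powerset.mpr hR, hRne⟩))

end WeightedGraph

section MarkovChain

variable {V : Type*} {K : V → V → ℝ} {π : V → ℝ}

noncomputable def symFlow (K : V → V → ℝ) (π : V → ℝ) (u v : V) : ℝ :=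
  (K u v * π u + K v u * π v) / 2

theorem symFlow_comm (K : V → V → ℝ) (π : V → ℝ) (u v : V) :
    symFlow K π u v = symFlow K π v u := by
  rw [symFlow, symFlow, add_comm]

theorem symFlow_nonneg (hK0 : ∀ u v, 0 ≤ K u v) (hπ : ∀ u, 0 ≤ π u) (u v : V) :
    0 ≤ symFlow K π u v := by
  have := hK0 u v; have := hK0 v u; have := hπ u; have := hπ v
  unfold symFlow; positivity

variable [Fintype V]

theorem sum_flow_out (hK1 : ∀ u, ∑ v, K u v = 1) (u : V) : ∑ v, K u v * π u = π u := by
  rw [← sum_mul, hK1, one_mul]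

theorem sum_flow_in (hstat : ∀ v, ∑ u, π u * K u v = π v) (u : V) :
    ∑ v, K v u * π v = π u := by
  simp_rw [mul_comm (K _ u)]; exact hstat u

theorem sum_symFlow (hK1 : ∀ u, ∑ v, K u v = 1) (hstat : ∀ v, ∑ u, π u * K u v = π v) (u : V) :
    ∑ v, symFlow K π u v = π u := by
  simp only [symFlow, ← sum_div, sum_add_distrib, sum_flow_out hK1, sum_flow_in hstat]
  ring

theorem cutWeight_symFlow [DecidableEq V] (hK1 : ∀ u, ∑ v, K u v = 1)
    (hstat : ∀ v, ∑ u, π u * K u v = π v) (Q : Finset V) :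
    cutWeight (symFlow K π) Q = dpart K π Q := by
  have hout : dpart K π Q = pim π Q - ∑ u ∈ Q, ∑ v ∈ Q, K u v * π u := by
    rw [dpart, pim, ← sum_sub_distrib]
    refine sum_congr rfl fun u _ => eq_sub_of_add_eq ?_
    rw [sum_compl_add_sum, sum_flow_out hK1]
  -- stationarity: the flow into `Q` equals the flow out of `Q`
  have hin : ∑ u ∈ Q, ∑ v ∈ Qᶜ, K v u * π v = pim π Q - ∑ u ∈ Q, ∑ v ∈ Q, K u v * π u := by
    rw [sum_comm (s := Q) (t := Q), pim, ← sum_sub_distrib]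
    refine sum_congr rfl fun u _ => eq_sub_of_add_eq ?_
    rw [sum_compl_add_sum, sum_flow_in hstat]
  calc cutWeight (symFlow K π) Q = (dpart K π Q + ∑ u ∈ Q, ∑ v ∈ Qᶜ, K v u * π v) / 2 := by
        simp only [cutWeight, symFlow, dpart, ← sum_div, sum_add_distrib]
    _ = dpart K π Q := by rw [hin, ← hout]; ring

theorem DeltaOp_mul_eq (hπ : ∀ u, π u ≠ 0) (g : V → ℝ) (u : V) :
    DeltaOp K π g u * π u = g u * π u - ∑ v, symFlow K π u v * g v := by
  simp only [DeltaOp, symFlow, sub_mul, div_mul_eq_mul_div, sum_mul, sum_div]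
  congr 1
  refine sum_congr rfl fun v _ => ?_
  field_simp [hπ u]

theorem sum_DeltaOp_mul_mul (hK1 : ∀ u, ∑ v, K u v = 1) (hstat : ∀ v, ∑ u, π u * K u v = π v)
    (hπ : ∀ u, π u ≠ 0) (g : V → ℝ) :
    ∑ u, DeltaOp K π g u * g u * π u = (∑ u, ∑ v, symFlow K π u v * (g u - g v) ^ 2) / 2 := by
  rw [sum_sum_mul_sub_sq (symFlow_comm K π) (sum_symFlow hK1 hstat)]
  simp only [mul_right_comm _ (g _) (π _), DeltaOp_mul_eq hπ, sub_mul, sum_sub_distrib, sum_mul]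
  simp only [sq, mul_comm, mul_left_comm]
  ring

theorem DeltaOp_neg (g : V → ℝ) : DeltaOp K π (-g) = -DeltaOp K π g := by
  ext u
  simp only [DeltaOp, Pi.neg_apply, mul_neg, sum_neg_distrib]
  ring

end MarkovChain

theorem iota2_le {V : Type*} [Fintype V] [DecidableEq V] (K : V → V → ℝ) (π : V → ℝ)
    {Q : Finset V} (hQ : Q.Nonempty) (hQU : Q ≠ univ) :
    iota2 K π ≤ dpart K π Q / (2 * pim π Q * (1 - pim π Q)) := by
  refine csInf_le ?_ ⟨Q, hQ, hQU, rfl⟩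
  refine ((Set.finite_range fun R : Finset V =>
    dpart K π R / (2 * pim π R * (1 - pim π R))).subset ?_).bddBelow
  rintro _ ⟨R, -, -, rfl⟩
  exact ⟨R, rfl⟩

theorem le_iota2 {V : Type*} [Fintype V] [DecidableEq V] {K : V → V → ℝ} {π : V → ℝ} {a : ℝ}
    {Q : Finset V} (hQ : Q.Nonempty) (hQU : Q ≠ univ)
    (h : ∀ R : Finset V, R.Nonempty → R ≠ univ →
      a ≤ dpart K π R / (2 * pim π R * (1 - pim π R))) :
    a ≤ iota2 K π := by
  refine le_csInf ⟨_, Q, hQ, hQU, rfl⟩ ?_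
  rintro _ ⟨R, hR, hRU, rfl⟩
  exact h R hR hRU

section Cheeger

variable {V : Type*} [Fintype V] {K : V → V → ℝ} {π : V → ℝ}

theorem lam_mul_le_dpart [DecidableEq V] (hK1 : ∀ u, ∑ v, K u v = 1) (hπ : ∀ u, 0 < π u)
    (hπ1 : ∑ u, π u = 1) (hstat : ∀ v, ∑ u, π u * K u v = π v) {lam : ℝ}
    (hmin : ∀ g : V → ℝ, g ≠ 0 → (∑ u, g u * π u = 0) →
      lam * ∑ u, (g u) ^ 2 * π u ≤ ∑ u, DeltaOp K π g u * g u * π u)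
    {Q : Finset V} (hQ : Q.Nonempty) (hQU : Q ≠ univ) :
    lam * (pim π Q * (1 - pim π Q)) ≤ dpart K π Q := by
  set c := pim π Q
  set g : V → ℝ := fun u => (if u ∈ Q then 1 else 0) - c
  have hmean : ∑ u, g u * π u = 0 := by
    simp only [g, sub_mul, sum_sub_distrib, ite_mul, one_mul, zero_mul, sum_ite_mem, univ_inter,
      ← mul_sum, hπ1, c, pim]
    ring
  have hg0 : g ≠ 0 := fun h => by
    obtain ⟨u, hu⟩ := hQ
    have := congrFun h u
    simp only [g, hu, if_true, Pi.zero_apply] at this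
    linarith [pim_lt_one hπ hπ1 hQU]
  have hnorm : ∑ u, g u ^ 2 * π u = c * (1 - c) := by
    have hpt : ∀ u, g u ^ 2 * π u = (1 - 2 * c) * (if u ∈ Q then π u else 0) + c ^ 2 * π u := by
      intro u
      by_cases hu : u ∈ Q
      · simp [g, hu]; ring
      · simp [g, hu]
    rw [sum_congr rfl fun u _ => hpt u, sum_add_distrib, ← mul_sum, ← mul_sum, sum_ite_mem,
      univ_inter, hπ1]
    simp only [c, pim]
    ring
  have henergy : ∑ u, DeltaOp K π g u * g u * π u = dpart K π Q := by
    rw [sum_DeltaOp_mul_mul hK1 hstat (fun u => (hπ u).ne'), ← cutWeight_symFlow hK1 hstat,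
      div_eq_iff two_ne_zero, mul_comm, ← sum_sum_mul_indicator_sub_sq (symFlow_comm K π) Q]
    simp only [g, sub_sub_sub_cancel_right]
  simpa [hnorm, henergy] using hmin g hg0 hmean

theorem sum_sum_symFlow_mul_posPart_sub_sq_le (hK0 : ∀ u v, 0 ≤ K u v)
    (hK1 : ∀ u, ∑ v, K u v = 1) (hπ : ∀ u, 0 < π u) (hstat : ∀ v, ∑ u, π u * K u v = π v)
    {lam : ℝ} {f : V → ℝ} (heig : DeltaOp K π f = fun u => lam * f u) :
    ∑ u, ∑ v, symFlow K π u v * (max (f u) 0 - max (f v) 0) ^ 2 ≤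
      2 * lam * ∑ u, max (f u) 0 ^ 2 * π u := by
  set g : V → ℝ := fun u => max (f u) 0
  rw [sum_sum_mul_sub_sq (symFlow_comm K π) (sum_symFlow hK1 hstat)]
  have heig' : ∀ u, ∑ v, symFlow K π u v * f v = (1 - lam) * (f u * π u) := fun u => by
    have := DeltaOp_mul_eq (K := K) (fun u => (hπ u).ne') f u
    rw [heig] at this
    linarith
  -- on `{f > 0}`, raising `f` to `g ≥ f` only increases the averaged neighbour values
  have hpt : ∀ u, (1 - lam) * (g u ^ 2 * π u) ≤ ∑ v, symFlow K π u v * g u * g v := by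
    intro u
    rcases le_or_gt (f u) 0 with h | h
    · simp [g, max_eq_right h]
    have hgu : g u = f u := max_eq_left h.le
    calc (1 - lam) * (g u ^ 2 * π u) = g u * ∑ v, symFlow K π u v * f v := by
          rw [heig', hgu]; ring
      _ ≤ g u * ∑ v, symFlow K π u v * g v :=
          mul_le_mul_of_nonneg_left (sum_le_sum fun v _ =>
            mul_le_mul_of_nonneg_left (le_max_left _ _)
              (symFlow_nonneg hK0 (fun u => (hπ u).le) u v)) (le_max_right _ _)
      _ = ∑ v, symFlow K π u v * g u * g v := by
          rw [mul_sum]; exact sum_congr rfl fun v _ => by ring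
  have := sum_le_sum fun u (_ : u ∈ univ) => hpt u
  rw [← mul_sum] at this
  linarith

theorem exists_dpart_div_le_sqrt_of_pim_pos_le_half [DecidableEq V] (hK0 : ∀ u v, 0 ≤ K u v)
    (hK1 : ∀ u, ∑ v, K u v = 1) (hπ : ∀ u, 0 < π u) (hstat : ∀ v, ∑ u, π u * K u v = π v)
    {lam : ℝ} {f : V → ℝ} (heig : DeltaOp K π f = fun u => lam * f u)
    (hpos : ∃ u, 0 < f u) (hneg : ∃ u, f u < 0)
    (hhalf : pim π (univ.filter (0 < f ·)) ≤ 1 / 2) :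
    ∃ Q : Finset V, Q.Nonempty ∧ Q ≠ univ ∧
      dpart K π Q / (2 * pim π Q * (1 - pim π Q)) ≤ Real.sqrt (2 * lam) := by
  set g : V → ℝ := fun u => max (f u) 0
  set N := ∑ u, g u ^ 2 * π u
  set D := ∑ u, ∑ v, symFlow K π u v * (g u - g v) ^ 2
  set B := ∑ u, ∑ v, symFlow K π u v * (g u + g v) ^ 2
  have hS0 := symFlow_nonneg hK0 (fun u => (hπ u).le)
  have hsupp : univ.filter (0 < g · ^ 2) = univ.filter (0 < f ·) :=
    filter_congr fun u _ => by simp [g, sq_pos_iff]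
  obtain ⟨Q, hQP, hQ, hcut⟩ := exists_cutWeight_div_pim_mul_le (symFlow_comm K π) hπ
    (φ := (g · ^ 2)) (fun u => sq_nonneg _) (hsupp ▸ by simpa [Finset.Nonempty] using hpos)
  rw [hsupp] at hQP
  have hN : 0 < N := by
    obtain ⟨u, hu⟩ := hpos
    exact sum_pos' (fun v _ => by have := hπ v; positivity)
      ⟨u, mem_univ u, by have := hπ u; simp [g, hu]; positivity⟩
  have hD : D ≤ 2 * lam * N := sum_sum_symFlow_mul_posPart_sub_sq_le hK0 hK1 hπ hstat heig
  have hD0 : 0 ≤ D := sum_nonneg fun u _ => sum_nonneg fun v _ => by have := hS0 u v; positivity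
  have hB0 : 0 ≤ B := sum_nonneg fun u _ => sum_nonneg fun v _ => by have := hS0 u v; positivity
  have hBD :=
    sum_sum_mul_add_sq_add_sum_sum_mul_sub_sq (symFlow_comm K π) (sum_symFlow hK1 hstat) g
  have hvar : ∑ u, ∑ v, symFlow K π u v * |g u ^ 2 - g v ^ 2| ≤ Real.sqrt (2 * lam) * (2 * N) :=
    calc _ ≤ Real.sqrt (D * B) := Real.le_sqrt_of_sq_le (sq_sum_sum_mul_abs_sq_sub_sq_le hS0 g)
      _ ≤ Real.sqrt (2 * lam * N * (4 * N)) := by gcongr <;> linarith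
      _ = Real.sqrt (2 * lam) * (2 * N) := by
          rw [show 2 * lam * N * (4 * N) = 2 * lam * (2 * N) ^ 2 by ring,
            Real.sqrt_mul' _ (sq_nonneg _), Real.sqrt_sq (by positivity)]
  have hQU : Q ≠ univ := by
    obtain ⟨w, hw⟩ := hneg
    exact fun h => (mem_filter.mp (hQP (h ▸ mem_univ w))).2.not_gt hw
  have hQhalf : pim π Q ≤ 1 / 2 :=
    (sum_le_sum_of_subset_of_nonneg hQP fun u _ _ => (hπ u).le).trans hhalf
  have hQpos := pim_pos hπ hQ
  refine ⟨Q, hQ, hQU, ?_⟩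
  rw [← cutWeight_symFlow hK1 hstat]
  calc _ ≤ cutWeight (symFlow K π) Q / pim π Q :=
        div_le_div_of_nonneg_left (sum_nonneg fun u _ => sum_nonneg fun v _ => hS0 u v) hQpos
          (by nlinarith)
    _ ≤ Real.sqrt (2 * lam) := le_of_mul_le_mul_right (hcut.trans hvar) (by positivity)

theorem exists_dpart_div_le_sqrt [DecidableEq V] (hK0 : ∀ u v, 0 ≤ K u v)
    (hK1 : ∀ u, ∑ v, K u v = 1) (hπ : ∀ u, 0 < π u) (hπ1 : ∑ u, π u = 1)
    (hstat : ∀ v, ∑ u, π u * K u v = π v) {lam : ℝ} {f : V → ℝ} (hf0 : f ≠ 0)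
    (hmean : ∑ u, f u * π u = 0) (heig : DeltaOp K π f = fun u => lam * f u) :
    ∃ Q : Finset V, Q.Nonempty ∧ Q ≠ univ ∧
      dpart K π Q / (2 * pim π Q * (1 - pim π Q)) ≤ Real.sqrt (2 * lam) := by
  have hpos := exists_pos_of_sum_mul_eq_zero hπ hf0 hmean
  have hneg : ∃ u, 0 < (-f) u :=
    exists_pos_of_sum_mul_eq_zero hπ (neg_ne_zero.mpr hf0) (by simp [hmean])
  have hsplit : pim π (univ.filter (0 < f ·)) + pim π (univ.filter (0 < (-f) ·)) ≤ 1 := by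
    rw [pim, pim, ← sum_union (disjoint_filter.mpr fun u _ h1 h2 => by simp at h2; linarith),
      ← hπ1]
    exact sum_le_univ_sum_of_nonneg fun u => (hπ u).le
  rcases le_or_gt (pim π (univ.filter (0 < f ·))) (1 / 2) with hhalf | hhalf
  · exact exists_dpart_div_le_sqrt_of_pim_pos_le_half hK0 hK1 hπ hstat heig hpos
      (by simpa using hneg) hhalf
  · refine exists_dpart_div_le_sqrt_of_pim_pos_le_half hK0 hK1 hπ hstat ?_ hneg
      (by simpa using hpos) (by linarith)
    rw [DeltaOp_neg, heig]
    ext u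
    simp

end Cheeger

theorem classical_cheeger_inequality_general {V : Type*} [Fintype V] [DecidableEq V]
    (K : V → V → ℝ) (π : V → ℝ)
    (hK0 : ∀ u v, 0 ≤ K u v) (hK1 : ∀ u, ∑ v, K u v = 1)
    (hπ : ∀ u, 0 < π u) (hπ1 : ∑ u, π u = 1)
    (hstat : ∀ v, ∑ u, π u * K u v = π v)
    (lam : ℝ) (f : V → ℝ) (hf0 : f ≠ 0)
    (hforth : ∑ u, f u * π u = 0)
    (heig : DeltaOp K π f = fun u => lam * f u)
    (hmin : ∀ g : V → ℝ, g ≠ 0 → (∑ u, g u * π u = 0) →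
      lam * ∑ u, (g u) ^ 2 * π u ≤ ∑ u, DeltaOp K π g u * g u * π u) :
    lam / 2 ≤ iota2 K π ∧ iota2 K π ≤ Real.sqrt (2 * lam) := by
  obtain ⟨Q, hQ, hQU, hupper⟩ := exists_dpart_div_le_sqrt hK0 hK1 hπ hπ1 hstat hf0 hforth heig
  refine ⟨le_iota2 hQ hQU fun R hR hRU => ?_, (iota2_le K π hQ hQU).trans hupper⟩
  have hR0 := pim_pos hπ hR
  have hR1 := pim_lt_one hπ hπ1 hRU
  rw [le_div_iff₀ (by nlinarith)]
  linarith [lam_mul_le_dpart hK1 hπ hπ1 hstat hmin hR hRU]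

theorem classical_cheeger_inequality {V : Type*} [Fintype V] [DecidableEq V]
    (K : V → V → ℝ) (π : V → ℝ)
    (hK0 : ∀ u v, 0 ≤ K u v) (hK1 : ∀ u, ∑ v, K u v = 1)
    (hπ : ∀ u, 0 < π u) (hπ1 : ∑ u, π u = 1)
    (hstat : ∀ v, ∑ u, π u * K u v = π v)
    (hirr : ∀ Q : Finset V, Q.Nonempty → Q ≠ Finset.univ → 0 < dpart K π Q)
    (lam : ℝ) (f : V → ℝ) (hf0 : f ≠ 0)
    (hforth : ∑ u, f u * π u = 0)
    (heig : DeltaOp K π f = fun u => lam * f u)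
    (hmin : ∀ g : V → ℝ, g ≠ 0 → (∑ u, g u * π u = 0) →
      lam * ∑ u, (g u) ^ 2 * π u ≤ ∑ u, DeltaOp K π g u * g u * π u) :
    lam / 2 ≤ iota2 K π ∧ iota2 K π ≤ Real.sqrt (2 * lam) :=
  classical_cheeger_inequality_general K π hK0 hK1 hπ hπ1 hstat lam f hf0 hforth heig hmin
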